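/- arXiv:2512.11386 — 7 statements merged into one kernel-verified Lean document; each statement's English description precedes it below -/
import Mathlib

section
/- Let M be a pointed metric space and let K ⊆ F(M) be bounded. Then K is relatively norm-compact if and only if for every ε > 0 there exists a finite subset F ⊆ M such that K ⊆ F(F) + ε B_{F(M)}. -/
open Metric Set Filter Pointwise

noncomputable section

/-- Data witnessing that the Banach space `F`, together with the map `toFun : M → F`
(playing the role of `δ`), is (isometrically) the Lipschitz free space over the
pointed metric space `M` with base point `base`:
`toFun` sends the base point to `0`, is an isometry, has dense linear span, and every
Lipschitz function on `M` vanishing at `base` extends to a bounded linear functional. -/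
structure FreeSpaceData (M : Type*) [MetricSpace M] (base : M)
    (F : Type*) [NormedAddCommGroup F] [NormedSpace ℝ F] where
  toFun : M → F
  map_base : toFun base = 0
  norm_sub : ∀ x y : M, ‖toFun x - toFun y‖ = dist x y
  dense_span : (Submodule.span ℝ (Set.range toFun)).topologicalClosure = ⊤
  extend : ∀ (K : NNReal) (f : M → ℝ), LipschitzWith K f → f base = 0 →
      ∃ φ : F →L[ℝ] ℝ, ‖φ‖ ≤ K ∧ ∀ x, φ (toFun x) = f x

namespace FreeSpaceData

variable {M : Type*} [MetricSpace M] {base : M}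
  {F : Type*} [NormedAddCommGroup F] [NormedSpace ℝ F]

/-- `F(S)`: the closed linear span of `δ(S ∪ {base})` inside the free space. -/
def freeSub (h : FreeSpaceData M base F) (S : Set M) : Submodule ℝ F :=
  (Submodule.span ℝ (h.toFun '' (S ∪ {base}))).topologicalClosure

/-- A bounded set `W ⊆ F(M)` is uniformly regular if for every `ε > 0` and every open
`U ⊆ M` there is a compact `K ⊆ U` with `W ⊆ F(K ∪ (M \ U)) + ε B_{F(M)}`. -/
def UniformlyRegular (h : FreeSpaceData M base F) (W : Set F) : Prop :=
  Bornology.IsBounded W ∧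
    ∀ ε : ℝ, 0 < ε → ∀ U : Set M, IsOpen U →
      ∃ K : Set M, K ⊆ U ∧ IsCompact K ∧
        W ⊆ ↑(h.freeSub (K ∪ Uᶜ)) + Metric.closedBall (0 : F) ε

/-- The elementary molecule `m_{xy} = (δ x - δ y)/d(x,y)`. -/
def molecule (h : FreeSpaceData M base F) (x y : M) : F :=
  (dist x y)⁻¹ • (h.toFun x - h.toFun y)

/-- The support of `γ ∈ F(M)`: the smallest closed `S ⊆ M` with `γ ∈ F(S)`. -/
def support (h : FreeSpaceData M base F) (γ : F) : Set M :=
  ⋂₀ {S : Set M | IsClosed S ∧ γ ∈ h.freeSub S}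

end FreeSpaceData

/-- A bounded set `W` is a V*-set if `sup_{w ∈ W} |x_n*(w)| → 0` for every weakly
unconditionally Cauchy series `∑ x_n*` in the dual. -/
def IsVStarSet {F : Type*} [NormedAddCommGroup F] [NormedSpace ℝ F] (W : Set F) : Prop :=
  Bornology.IsBounded W ∧
    ∀ φ : ℕ → (F →L[ℝ] ℝ), (∀ v : F, Summable fun n => |φ n v|) →
      Filter.Tendsto (fun n => ⨆ w : W, |φ n (w : F)|) Filter.atTop (nhds 0)

/-- A set is relatively weakly compact if its closure in the weak topology is compact. -/
def RelWeaklyCompact (F : Type*) [NormedAddCommGroup F] [NormedSpace ℝ F]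
    (W : Set F) : Prop :=
  IsCompact (closure (toWeakSpace ℝ F '' W))

/-- A set `W` is weakly precompact if every sequence in `W` has a weakly Cauchy
subsequence. -/
def WeaklyPrecompact {F : Type*} [NormedAddCommGroup F] [NormedSpace ℝ F]
    (W : Set F) : Prop :=
  ∀ u : ℕ → F, (∀ n, u n ∈ W) →
    ∃ s : ℕ → ℕ, StrictMono s ∧ ∀ φ : F →L[ℝ] ℝ, ∃ l : ℝ,
      Filter.Tendsto (fun k => φ (u (s k))) Filter.atTop (nhds l)

/-- A metric space is scattered if every nonempty closed subset has an isolated point. -/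
def Scattered (M : Type*) [MetricSpace M] : Prop :=
  ∀ S : Set M, IsClosed S → S.Nonempty →
    ∃ x ∈ S, ∃ ε : ℝ, 0 < ε ∧ S ∩ Metric.ball x ε = {x}

/-!
In a Banach space a set is relatively compact iff it is totally bounded. If `K` is totally
bounded, approximate the points of a finite `ε/2`-net by finite linear combinations of the
`δ(x)`, which are dense; the finitely many points of `M` involved form `S`. Conversely, if
`K ⊆ F(S) + ε B` with `S` finite, then `F(S)` is finite-dimensional, so the bounded part of
it that `K` sees is compact, and `K` lies in its `ε`-neighbourhood.
-/

theorem isCompact_closure_iff_totallyBounded {α : Type*} [UniformSpace α] [CompleteSpace α]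
    {s : Set α} : IsCompact (closure s) ↔ TotallyBounded s :=
  ⟨fun hs => hs.totallyBounded.subset subset_closure,
    fun hs => hs.closure.isCompact_of_isClosed isClosed_closure⟩

theorem Metric.totallyBounded_of_forall_subset_thickening {X : Type*} [PseudoMetricSpace X]
    {s : Set X} (h : ∀ ε > 0, ∃ t, TotallyBounded t ∧ s ⊆ thickening ε t) :
    TotallyBounded s := by
  rw [Metric.totallyBounded_iff]
  intro ε hε
  obtain ⟨t, ht, hst⟩ := h (ε / 2) (half_pos hε)
  obtain ⟨N, hN, htN⟩ := Metric.totallyBounded_iff.mp ht (ε / 2) (half_pos hε)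
  refine ⟨N, hN, fun x hx => ?_⟩
  obtain ⟨z, hz, hxz⟩ := mem_thickening_iff.mp (hst hx)
  obtain ⟨y, hy, hzy⟩ := mem_iUnion₂.mp (htN hz)
  have hxy : dist x y < ε := by linarith [dist_triangle x z y, mem_ball.mp hzy]
  exact mem_iUnion₂.mpr ⟨y, hy, mem_ball.mpr hxy⟩

theorem Submodule.exists_finite_mem_span_image {R M ι : Type*} [Semiring R] [AddCommMonoid M]
    [Module R M] {f : ι → M} {x : M} (hx : x ∈ span R (range f)) :
    ∃ S : Set ι, S.Finite ∧ x ∈ span R (f '' S) := by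
  obtain ⟨T, hT, hxT⟩ := mem_span_finite_of_mem_span hx
  rw [← image_univ] at hT
  obtain ⟨S, -, hS, hxS⟩ :=
    exists_subset_image_finite_and (p := fun T => x ∈ span R T).mp
      ⟨(T : Set M), hT, T.finite_toSet, hxT⟩
  exact ⟨S, hS, hxS⟩

section NormedSpace

variable {𝕜 E : Type*} [NontriviallyNormedField 𝕜] [NormedAddCommGroup E] [NormedSpace 𝕜 E]

theorem TotallyBounded.exists_finite_subset_span_image_add_closedBall {ι : Type*}
    {f : ι → E} (hf : Dense (Submodule.span 𝕜 (range f) : Set E)) {s : Set E}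
    (hs : TotallyBounded s) {ε : ℝ} (hε : 0 < ε) :
    ∃ S : Set ι, S.Finite ∧
      s ⊆ (Submodule.span 𝕜 (f '' S) : Set E) + closedBall 0 ε := by
  obtain ⟨t, ht, hst⟩ := Metric.totallyBounded_iff.mp hs (ε / 2) (half_pos hε)
  have approx : ∀ y, ∃ S : Set ι, S.Finite ∧
      ∃ v ∈ Submodule.span 𝕜 (f '' S), dist y v < ε / 2 := by
    intro y
    obtain ⟨w, hw, hyw⟩ := Metric.mem_closure_iff.mp (hf y) (ε / 2) (half_pos hε)
    obtain ⟨S, hS, hwS⟩ := Submodule.exists_finite_mem_span_image hw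
    exact ⟨S, hS, w, hwS, hyw⟩
  choose S hS v hv hyv using approx
  refine ⟨⋃ y ∈ t, S y, ht.biUnion fun y _ => hS y, fun x hx => ?_⟩
  obtain ⟨y, hy, hxy⟩ := mem_iUnion₂.mp (hst hx)
  refine ⟨v y, Submodule.span_mono (image_mono (subset_biUnion_of_mem hy)) (hv y), x - v y, ?_,
    add_sub_cancel _ _⟩
  rw [mem_closedBall_zero_iff, ← dist_eq_norm]
  linarith [dist_triangle x y (v y), mem_ball.mp hxy, hyv y]

theorem totallyBounded_of_forall_subset_add_closedBall [LocallyCompactSpace 𝕜] {s : Set E}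
    (hs : Bornology.IsBounded s)
    (h : ∀ ε > 0, ∃ V : Submodule 𝕜 E, FiniteDimensional 𝕜 V ∧
      s ⊆ (V : Set E) + closedBall 0 ε) :
    TotallyBounded s := by
  obtain ⟨R, hR⟩ := hs.subset_closedBall 0
  refine Metric.totallyBounded_of_forall_subset_thickening fun ε hε => ?_
  obtain ⟨V, hV, hsV⟩ := h (ε / 2) (half_pos hε)
  have := FiniteDimensional.proper 𝕜 V
  refine ⟨(↑) '' closedBall (0 : V) (R + ε / 2),
    ((isCompact_closedBall _ _).image continuous_subtype_val).totallyBounded, fun x hx => ?_⟩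
  obtain ⟨v, hv, b, hb, rfl⟩ := hsV hx
  have hb' : ‖b‖ ≤ ε / 2 := mem_closedBall_zero_iff.mp hb
  have hvb : ‖v + b‖ ≤ R := mem_closedBall_zero_iff.mp (hR hx)
  refine mem_thickening_iff.mpr ⟨v, ⟨⟨v, hv⟩, ?_, rfl⟩, ?_⟩
  · rw [mem_closedBall_zero_iff]
    calc ‖v‖ = ‖v + b - b‖ := by rw [add_sub_cancel_right]
      _ ≤ ‖v + b‖ + ‖b‖ := norm_sub_le _ _
      _ ≤ R + ε / 2 := by linarith
  · rw [dist_eq_norm, add_sub_cancel_left]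
    linarith

end NormedSpace

namespace FreeSpaceData

variable {M : Type*} [MetricSpace M] {base : M}
  {F : Type*} [NormedAddCommGroup F] [NormedSpace ℝ F] (h : FreeSpaceData M base F)

theorem dense_span_range : Dense (Submodule.span ℝ (range h.toFun) : Set F) :=
  Submodule.dense_iff_topologicalClosure_eq_top.mpr h.dense_span

theorem span_image_le_freeSub (S : Set M) : Submodule.span ℝ (h.toFun '' S) ≤ h.freeSub S :=
  (Submodule.span_mono (image_mono subset_union_left)).trans (Submodule.le_topologicalClosure _)

theorem finiteDimensional_freeSub {S : Set M} (hS : S.Finite) :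
    FiniteDimensional ℝ (h.freeSub S) := by
  have : FiniteDimensional ℝ (Submodule.span ℝ (h.toFun '' (S ∪ {base}))) :=
    FiniteDimensional.span_of_finite ℝ ((hS.union (finite_singleton base)).image _)
  rwa [freeSub, (Submodule.closed_of_finiteDimensional _).submodule_topologicalClosure_eq]

end FreeSpaceData

/-- a bounded set `K ⊆ F(M)` is relatively norm-compact iff for every
`ε > 0` there is a finite `S ⊆ M` with `K ⊆ F(S) + ε B_{F(M)}`. -/
theorem stmt_4 {M : Type*} [MetricSpace M] (base : M)
    {F : Type*} [NormedAddCommGroup F] [NormedSpace ℝ F] [CompleteSpace F]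
    (h : FreeSpaceData M base F) (K : Set F) (hK : Bornology.IsBounded K) :
    IsCompact (closure K) ↔
      ∀ ε : ℝ, 0 < ε → ∃ S : Set M, S.Finite ∧
        K ⊆ ↑(h.freeSub S) + Metric.closedBall (0 : F) ε := by
  rw [isCompact_closure_iff_totallyBounded]
  constructor
  · intro hKtb ε hε
    obtain ⟨S, hS, hKS⟩ :=
      hKtb.exists_finite_subset_span_image_add_closedBall h.dense_span_range hε
    exact ⟨S, hS, hKS.trans (add_subset_add_right (h.span_image_le_freeSub S))⟩
  · intro H
    refine totallyBounded_of_forall_subset_add_closedBall (𝕜 := ℝ) hK fun ε hε => ?_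
    obtain ⟨S, hS, hKS⟩ := H ε hε
    exact ⟨h.freeSub S, h.finiteDimensional_freeSub hS, hKS⟩
end
end

section
/- Let M be a pointed metric space, U ⊆ M an open set, ε ∈ (0,1), n a positive integer, and γ = (1/n) ∑_{i=1}^n m_{u_i v_i} ∈ F(M) where u_i ≠ v_i ∈ M for each i. If dist(γ, F(M \ U)) > ε, then the number of indices i ∈ {1,…,n} such that B(u_i, r_i) ⊆ U or B(v_i, r_i) ⊆ U is strictly greater than nε/2, where r_i = (ε/8)·d(u_i, v_i) and B(p, r) = {x ∈ M : d(x,p) ≤ r} denotes the closed ball. -/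
open Metric Set Filter Pointwise

noncomputable section

/-! For an index `i` at which neither ball `B(u_i, r_i)`, `B(v_i, r_i)` lies in `U`, pick `a`, `b`
outside `U` in these balls: then `(δ a - δ b) / d(u_i, v_i) ∈ F(M \ U)` lies within `ε/4` of
`m_{u_i v_i}`, while every molecule lies within `1` of `0 ∈ F(M \ U)`. Distance to a subspace is
the quotient norm, hence subadditive and homogeneous, so if `k` indices are good then
`ε < dist(γ, F(M \ U)) ≤ (k + nε/4)/n`, i.e. `k > 3nε/4`. -/
theorem Submodule.norm_mkQ {E : Type*} [SeminormedAddCommGroup E] [NormedSpace ℝ E]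
    (p : Submodule ℝ E) (x : E) : ‖p.mkQ x‖ = infDist x p :=
  QuotientAddGroup.norm_mk (S := p.toAddSubgroup) x

theorem Submodule.infDist_smul_sum_le {E : Type*} [SeminormedAddCommGroup E] [NormedSpace ℝ E]
    (p : Submodule ℝ E) (t : ℝ) {ι : Type*} (s : Finset ι) (x : ι → E) :
    infDist (t • ∑ i ∈ s, x i) p ≤ ‖t‖ * ∑ i ∈ s, infDist (x i) p := by
  simp only [← p.norm_mkQ, map_smul, map_sum, norm_smul]
  gcongr
  exact norm_sum_le _ _

namespace FreeSpaceData

variable {M : Type*} [MetricSpace M] {base : M}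
  {F : Type*} [NormedAddCommGroup F] [NormedSpace ℝ F] (h : FreeSpaceData M base F)

theorem toFun_mem_freeSub {S : Set M} {x : M} (hx : x ∈ S) : h.toFun x ∈ h.freeSub S :=
  Submodule.le_topologicalClosure _ (Submodule.subset_span ⟨x, Or.inl hx, rfl⟩)

theorem norm_molecule_le_one (x y : M) : ‖h.molecule x y‖ ≤ 1 := by
  rw [molecule, norm_smul, h.norm_sub, norm_inv, Real.norm_of_nonneg dist_nonneg]
  exact inv_mul_le_one_of_le₀ le_rfl dist_nonneg

theorem infDist_molecule_le_one (S : Set M) (x y : M) :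
    infDist (h.molecule x y) (h.freeSub S) ≤ 1 :=
  (infDist_le_dist_of_mem (h.freeSub S).zero_mem).trans <|
    (dist_zero_right _).trans_le (h.norm_molecule_le_one x y)

theorem infDist_molecule_le {S : Set M} {x y a b : M} (ha : a ∈ S) (hb : b ∈ S) :
    infDist (h.molecule x y) (h.freeSub S) ≤ (dist x a + dist y b) / dist x y := by
  have hmem : (dist x y)⁻¹ • (h.toFun a - h.toFun b) ∈ h.freeSub S :=
    Submodule.smul_mem _ _ (sub_mem (h.toFun_mem_freeSub ha) (h.toFun_mem_freeSub hb))
  refine (infDist_le_dist_of_mem hmem).trans ?_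
  rw [dist_eq_norm, molecule, ← smul_sub, norm_smul, norm_inv, Real.norm_of_nonneg dist_nonneg,
    div_eq_inv_mul]
  gcongr
  calc ‖h.toFun x - h.toFun y - (h.toFun a - h.toFun b)‖
      = ‖(h.toFun x - h.toFun a) - (h.toFun y - h.toFun b)‖ := by congr 1; abel
    _ ≤ ‖h.toFun x - h.toFun a‖ + ‖h.toFun y - h.toFun b‖ := norm_sub_le _ _
    _ = dist x a + dist y b := by rw [h.norm_sub, h.norm_sub]

theorem infDist_molecule_le_of_not_closedBall_subset {U : Set M} {x y : M} {r : ℝ} (hr : 0 ≤ r)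
    (hx : ¬closedBall x (r * dist x y) ⊆ U) (hy : ¬closedBall y (r * dist x y) ⊆ U) :
    infDist (h.molecule x y) (h.freeSub Uᶜ) ≤ 2 * r := by
  obtain ⟨a, hax, haU⟩ := not_subset.1 hx
  obtain ⟨b, hby, hbU⟩ := not_subset.1 hy
  refine (h.infDist_molecule_le haU hbU).trans (div_le_of_le_mul₀ dist_nonneg (by positivity) ?_)
  linarith [mem_closedBall'.1 hax, mem_closedBall'.1 hby]

end FreeSpaceData

theorem stmt_5_general {M : Type*} [MetricSpace M] (base : M)
    {F : Type*} [NormedAddCommGroup F] [NormedSpace ℝ F]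
    (h : FreeSpaceData M base F)
    (U : Set M) (ε : ℝ) (hε : ε ∈ Set.Ioo (0 : ℝ) 1)
    (n : ℕ) (u v : Fin n → M)
    (γ : F) (hγ : γ = (n : ℝ)⁻¹ • ∑ i, h.molecule (u i) (v i))
    (hdist : ε < Metric.infDist γ ↑(h.freeSub Uᶜ)) :
    (n : ℝ) * ε / 2 <
      ({i : Fin n | Metric.closedBall (u i) (ε / 8 * dist (u i) (v i)) ⊆ U ∨
          Metric.closedBall (v i) (ε / 8 * dist (u i) (v i)) ⊆ U} : Set (Fin n)).ncard := by
  classical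
  obtain ⟨hε0, -⟩ := hε
  set good := {i : Fin n | closedBall (u i) (ε / 8 * dist (u i) (v i)) ⊆ U ∨
    closedBall (v i) (ε / 8 * dist (u i) (v i)) ⊆ U}
  have hmolecule : ∀ i, infDist (h.molecule (u i) (v i)) (h.freeSub Uᶜ) ≤
      (if i ∈ good then 1 else 0) + ε / 4 := by
    intro i
    split_ifs with hi
    · linarith [h.infDist_molecule_le_one Uᶜ (u i) (v i)]
    · obtain ⟨hu, hv⟩ := not_or.1 hi
      linarith [h.infDist_molecule_le_of_not_closedBall_subset (by positivity) hu hv]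
  have key : ε < (n : ℝ)⁻¹ * (good.ncard + n * (ε / 4)) :=
    calc ε < infDist γ (h.freeSub Uᶜ) := hdist
      _ ≤ ‖(n : ℝ)⁻¹‖ * ∑ i, infDist (h.molecule (u i) (v i)) (h.freeSub Uᶜ) :=
        hγ ▸ Submodule.infDist_smul_sum_le _ _ _ _
      _ ≤ (n : ℝ)⁻¹ * ∑ i, ((if i ∈ good then 1 else 0) + ε / 4) := by
        rw [norm_inv, RCLike.norm_natCast]
        gcongr with i
        exact hmolecule i
      _ = (n : ℝ)⁻¹ * (good.ncard + n * (ε / 4)) := by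
        rw [Finset.sum_add_distrib, Finset.sum_boole, Set.ncard_eq_toFinset_card' good]
        simp
  have hn : (0 : ℝ) < n := by
    rcases Nat.eq_zero_or_pos n with rfl | hn
    · rw [Nat.cast_zero, inv_zero, zero_mul] at key
      linarith
    · exact_mod_cast hn
  rw [inv_mul_eq_div, lt_div_iff₀ hn] at key
  linarith

/-- if `γ = (1/n) ∑ m_{u_i v_i}` satisfies `dist(γ, F(M \ U)) > ε`, then
strictly more than `nε/2` of the indices `i` satisfy
`B(u_i, r_i) ⊆ U` or `B(v_i, r_i) ⊆ U`, where `r_i = (ε/8) d(u_i, v_i)`. -/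
theorem stmt_5 {M : Type*} [MetricSpace M] (base : M)
    {F : Type*} [NormedAddCommGroup F] [NormedSpace ℝ F] [CompleteSpace F]
    (h : FreeSpaceData M base F)
    (U : Set M) (hU : IsOpen U) (ε : ℝ) (hε : ε ∈ Set.Ioo (0 : ℝ) 1)
    (n : ℕ) (hn : 0 < n) (u v : Fin n → M) (huv : ∀ i, u i ≠ v i)
    (γ : F) (hγ : γ = (n : ℝ)⁻¹ • ∑ i, h.molecule (u i) (v i))
    (hdist : ε < Metric.infDist γ ↑(h.freeSub Uᶜ)) :
    (n : ℝ) * ε / 2 <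
      ({i : Fin n | Metric.closedBall (u i) (ε / 8 * dist (u i) (v i)) ⊆ U ∨
          Metric.closedBall (v i) (ε / 8 * dist (u i) (v i)) ⊆ U} : Set (Fin n)).ncard :=
  stmt_5_general base h U ε hε n u v γ hγ hdist
end
end

section
/- Let M and N be pointed metric spaces (both base points denoted 0), let f : M → N be a Lipschitz map with f(0) = 0, and let f̂ : F(M) → F(N) be the unique bounded linear operator satisfying f̂(δ_M(x)) = δ_N(f(x)) for every x ∈ M. If W ⊆ F(M) is uniformly regular, then f̂(W) is uniformly regular in F(N). -/
open Metric Set Filter Pointwise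

noncomputable section

namespace FreeSpaceData

variable {M N : Type*} [MetricSpace M] [MetricSpace N] {baseM : M} {baseN : N}
  {F G : Type*} [NormedAddCommGroup F] [NormedSpace ℝ F]
  [NormedAddCommGroup G] [NormedSpace ℝ G]

theorem freeSub_mono (h : FreeSpaceData M baseM F) {S S' : Set M} (hS : S ⊆ S') :
    h.freeSub S ≤ h.freeSub S' :=
  Submodule.topologicalClosure_mono <|
    Submodule.span_mono <| image_mono <| union_subset_union_left _ hS

theorem mapsTo_freeSub_image (hM : FreeSpaceData M baseM F) (hN : FreeSpaceData N baseN G)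
    {f : M → N} (hf0 : f baseM = baseN) (T : F →L[ℝ] G)
    (hT : ∀ x : M, T (hM.toFun x) = hN.toFun (f x)) (S : Set M) :
    MapsTo T (hM.freeSub S) (hN.freeSub (f '' S)) := by
  have hspan : MapsTo T (Submodule.span ℝ (hM.toFun '' (S ∪ {baseM})))
      (Submodule.span ℝ (hN.toFun '' (f '' S ∪ {baseN}))) := by
    intro v hv
    refine (Submodule.span_le.mpr ?_ : _ ≤ (Submodule.span ℝ _).comap (T : F →ₗ[ℝ] G)) hv
    rintro _ ⟨x, hx, rfl⟩
    refine Submodule.subset_span ⟨f x, ?_, (hT x).symm⟩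
    rcases hx with hx | rfl
    · exact Or.inl (mem_image_of_mem f hx)
    · exact Or.inr hf0
  simpa only [freeSub, Submodule.topologicalClosure_coe] using
    hspan.closure T.continuous

theorem image_subset_freeSub_add_closedBall (hM : FreeSpaceData M baseM F)
    (hN : FreeSpaceData N baseN G) {f : M → N} (hf0 : f baseM = baseN) (T : F →L[ℝ] G)
    (hT : ∀ x : M, T (hM.toFun x) = hN.toFun (f x)) {W : Set F} {S : Set M} {r : ℝ}
    (hW : W ⊆ ↑(hM.freeSub S) + closedBall (0 : F) r) :
    T '' W ⊆ ↑(hN.freeSub (f '' S)) + closedBall (0 : G) (‖T‖ * r) := by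
  rintro _ ⟨w, hw, rfl⟩
  obtain ⟨a, ha, b, hb, rfl⟩ := hW hw
  refine ⟨T a, mapsTo_freeSub_image hM hN hf0 T hT S ha, T b, ?_, (map_add T a b).symm⟩
  rw [mem_closedBall_zero_iff] at hb ⊢
  exact T.le_of_opNorm_le_of_le le_rfl hb

end FreeSpaceData

theorem stmt_6_general {M N : Type*} [MetricSpace M] [MetricSpace N] (baseM : M) (baseN : N)
    {F G : Type*} [NormedAddCommGroup F] [NormedSpace ℝ F]
    [NormedAddCommGroup G] [NormedSpace ℝ G]
    (hM : FreeSpaceData M baseM F) (hN : FreeSpaceData N baseN G)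
    (f : M → N) (K : NNReal) (hf : LipschitzWith K f) (hf0 : f baseM = baseN)
    (T : F →L[ℝ] G) (hT : ∀ x : M, T (hM.toFun x) = hN.toFun (f x))
    (W : Set F) (hW : hM.UniformlyRegular W) :
    hN.UniformlyRegular (T '' W) := by
  obtain ⟨hW_bdd, hW_reg⟩ := hW
  refine ⟨T.lipschitz.isBounded_image hW_bdd, fun ε hε U hU => ?_⟩
  have hT_pos : 0 < ‖T‖ + 1 := by positivity
  obtain ⟨L, hLU, hL, hWL⟩ :=
    hW_reg (ε / (‖T‖ + 1)) (by positivity) (f ⁻¹' U) (hU.preimage hf.continuous)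
  refine ⟨f '' L, image_subset_iff.mpr hLU, hL.image hf.continuous, ?_⟩
  have hS : f '' (L ∪ (f ⁻¹' U)ᶜ) ⊆ f '' L ∪ Uᶜ := by
    rw [image_union]
    exact union_subset_union_right _ (image_subset_iff.mpr subset_rfl)
  have hr : ‖T‖ * (ε / (‖T‖ + 1)) ≤ ε := by
    rw [mul_div_assoc', div_le_iff₀ hT_pos]
    nlinarith
  exact (hM.image_subset_freeSub_add_closedBall hN hf0 T hT hWL).trans <|
    add_subset_add (hN.freeSub_mono hS) (closedBall_subset_closedBall hr)

/-- the linearization `f̂ : F(M) → F(N)` of a base-point preserving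
Lipschitz map `f : M → N` (i.e. the bounded linear operator with `f̂(δ_M x) = δ_N (f x)`)
maps uniformly regular sets to uniformly regular sets. -/
theorem stmt_6 {M N : Type*} [MetricSpace M] [MetricSpace N] (baseM : M) (baseN : N)
    {F G : Type*} [NormedAddCommGroup F] [NormedSpace ℝ F] [CompleteSpace F]
    [NormedAddCommGroup G] [NormedSpace ℝ G] [CompleteSpace G]
    (hM : FreeSpaceData M baseM F) (hN : FreeSpaceData N baseN G)
    (f : M → N) (K : NNReal) (hf : LipschitzWith K f) (hf0 : f baseM = baseN)
    (T : F →L[ℝ] G) (hT : ∀ x : M, T (hM.toFun x) = hN.toFun (f x))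
    (W : Set F) (hW : hM.UniformlyRegular W) :
    hN.UniformlyRegular (T '' W) :=
  stmt_6_general baseM baseN hM hN f K hf hf0 T hT W hW
end
end

section
/- Let M be a metric space, let N ⊆ M be a closed subset containing a distinguished point 0, and let (f_i)_{i∈I} be a family of 1-Lipschitz functions f_i : N → ℝ with f_i(0) = 0 such that the sets U_i = {x ∈ N : f_i(x) ≠ 0} are pairwise disjoint. Then there exist 2-Lipschitz functions f̃_i : M → ℝ such that f̃_i restricted to N equals f_i for every i ∈ I, and the sets {x ∈ M : f̃_i(x) ≠ 0} are pairwise disjoint. -/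
/-!
Extend each `f i` to a `1`-Lipschitz `F i` on `M` and let `Z i ⊆ N` be the zero set of `f i`.
The function `t i x = d(x, Z i) - d(x, N)` is nonnegative, `2`-Lipschitz, and equals
`d(x, Z i) ≥ |f i x|` on `N`; truncating `F i` to the band `[-t i, t i]` therefore keeps it
an extension. The truncation vanishes unless `d(x, N) < d(x, Z i)`, and this cannot happen for
two indices at once: since the supports of the `f i` are disjoint, `N ⊆ Z i ∪ Z j`.
-/

open Metric Set Filter Pointwise

noncomputable section

open scoped NNReal

section

variable {M : Type*} [PseudoMetricSpace M]

theorem LipschitzWith.abs_le_mul_infDist {K : ℝ≥0} {f : M → ℝ} (hf : LipschitzWith K f)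
    {s : Set M} (hs : s.Nonempty) (hfs : ∀ y ∈ s, f y = 0) (x : M) :
    |f x| ≤ K * infDist x s := by
  rw [infDist_eq_iInf, Real.mul_iInf_of_nonneg K.coe_nonneg]
  have := hs.to_subtype
  exact le_ciInf fun y => by
    simpa [Real.dist_eq, hfs y y.2] using hf.dist_le_mul x y

theorem LipschitzWith.exists_extend_real_of_subtype {K : ℝ≥0} {s : Set M} {f : s → ℝ}
    (hf : LipschitzWith K f) : ∃ g : M → ℝ, LipschitzWith K g ∧ ∀ x : s, g x = f x := by
  have hrestrict : s.domRestrict (Function.extend (↑) f 0) = f :=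
    funext fun x => Subtype.val_injective.extend_apply f 0 x
  obtain ⟨g, hg, hgf⟩ :=
    (lipschitzOnWith_iff_restrict.2 (hrestrict ▸ hf)).extend_real
  exact ⟨g, hg, fun x => (hgf x.2).symm.trans (congrFun hrestrict x)⟩

theorem Metric.min_infDist_le_infDist_of_subset_union {s t u : Set M} (hu : u.Nonempty)
    (hst : u ⊆ s ∪ t) (x : M) : min (infDist x s) (infDist x t) ≤ infDist x u :=
  (le_infDist hu).2 fun _ hy => (hst hy).elim
    (fun hys => (min_le_left _ _).trans (infDist_le_dist_of_mem hys))
    (fun hyt => (min_le_right _ _).trans (infDist_le_dist_of_mem hyt))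

theorem LipschitzWith.exists_eqOn_of_infDist_lt_infDist {F : M → ℝ} (hF : LipschitzWith 1 F)
    {N Z : Set M} (hZN : Z ⊆ N) (hZ : Z.Nonempty) (hFZ : ∀ y ∈ Z, F y = 0) :
    ∃ g : M → ℝ, LipschitzWith 2 g ∧ EqOn g F N ∧
      ∀ x, g x ≠ 0 → infDist x N < infDist x Z := by
  set t : M → ℝ := fun x => infDist x Z - infDist x N
  have ht : LipschitzWith 2 t := by
    simpa [one_add_one_eq_two] using (lipschitz_infDist_pt Z).sub (lipschitz_infDist_pt N)
  have ht_nonneg : ∀ x, 0 ≤ t x := fun x => sub_nonneg.2 (infDist_le_infDist_of_subset hZN hZ)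
  refine ⟨fun x => max (min (F x) (t x)) (-t x), ?_, fun x hx => ?_, fun x hx => ?_⟩
  · simpa using (hF.min ht).max ht.neg
  · have hFt : |F x| ≤ t x := by
      simpa [t, infDist_zero_of_mem hx] using hF.abs_le_mul_infDist hZ hFZ x
    simp only [min_eq_left (abs_le.1 hFt).2, max_eq_left (abs_le.1 hFt).1]
  · refine sub_pos.1 ((ht_nonneg x).lt_of_ne' fun h => hx ?_)
    simp [h]

end

theorem stmt_7_general {M : Type*} [MetricSpace M] (N : Set M)
    (z : M) (hz : z ∈ N) {I : Type*}
    (f : I → N → ℝ) (hf : ∀ i, LipschitzWith 1 (f i)) (hf0 : ∀ i, f i ⟨z, hz⟩ = 0)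
    (hdisj : Pairwise fun i j =>
      Disjoint {x : N | f i x ≠ 0} {x : N | f j x ≠ 0}) :
    ∃ g : I → M → ℝ, (∀ i, LipschitzWith 2 (g i)) ∧
      (∀ i, ∀ x : N, g i x = f i x) ∧
      (Pairwise fun i j => Disjoint {x : M | g i x ≠ 0} {x : M | g j x ≠ 0}) := by
  choose F hF hFf using fun i => (hf i).exists_extend_real_of_subtype
  set Z : I → Set M := fun i => {y ∈ N | F i y = 0}
  have hZ : ∀ i, (Z i).Nonempty := fun i => ⟨z, hz, (hFf i ⟨z, hz⟩).trans (hf0 i)⟩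
  choose g hg hgF hg0 using fun i =>
    (hF i).exists_eqOn_of_infDist_lt_infDist (sep_subset N _) (hZ i) fun y hy => hy.2
  refine ⟨g, hg, fun i x => (hgF i x.2).trans (hFf i x), fun i j hij => ?_⟩
  have hNZ : N ⊆ Z i ∪ Z j := fun y hy => by
    by_contra hy'
    simp only [Z, mem_union, mem_sep_iff, hFf _ ⟨y, hy⟩, not_or, not_and] at hy'
    exact disjoint_left.1 (hdisj hij) (hy'.1 hy) (hy'.2 hy)
  refine disjoint_left.2 fun x hxi hxj => ?_
  exact (min_infDist_le_infDist_of_subset_union ⟨z, hz⟩ hNZ x).not_gt (lt_min (hg0 i x hxi) (hg0 j x hxj))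

/-- disjointly supported `1`-Lipschitz functions on a closed subset `N`
vanishing at the base point extend to disjointly supported `2`-Lipschitz functions on `M`. -/
theorem stmt_7 {M : Type*} [MetricSpace M] (N : Set M) (hN : IsClosed N)
    (z : M) (hz : z ∈ N) {I : Type*}
    (f : I → N → ℝ) (hf : ∀ i, LipschitzWith 1 (f i)) (hf0 : ∀ i, f i ⟨z, hz⟩ = 0)
    (hdisj : Pairwise fun i j =>
      Disjoint {x : N | f i x ≠ 0} {x : N | f j x ≠ 0}) :
    ∃ g : I → M → ℝ, (∀ i, LipschitzWith 2 (g i)) ∧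
      (∀ i, ∀ x : N, g i x = f i x) ∧
      (Pairwise fun i j => Disjoint {x : M | g i x ≠ 0} {x : M | g j x ≠ 0}) :=
  stmt_7_general N z hz f hf hf0 hdisj
end
end

section
/- Let M be a nonempty complete metric space in which every point is an accumulation point (a perfect metric space). Then M contains a bi-Lipschitz copy of a perfect subset of ℝ: there exist a compact perfect set C ⊆ ℝ, an injective map φ : C → M, and a constant L ≥ 1 such that (1/L)|s − t| ≤ d(φ(s), φ(t)) ≤ L|s − t| for all s, t ∈ C. -/
open Metric Set Filter Pointwise

noncomputable section

/-!
Grow a binary tree of pairs (point of `M`, real number). At a node `(p, t)` with radius `r`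
pick `q ≠ p` with `d(p, q) < r`, which exists because `M` has no isolated points; the children
are `(p, t)` and `(q, t + d(p, q))`, both with radius `d(p, q) / 8`. Siblings are thus exactly
`d(p, q)` apart both in `M` and in `ℝ`, while radii shrink by a factor `8` along every branch,
so each branch converges by completeness and everything below a child stays within
`d(p, q) / 7` of it. Two branches separating with gap `g` therefore have limits whose distances
in `M` and in `ℝ` both lie in `[5g/7, 9g/7]`: the `M`-limit is a `2`-bi-Lipschitz function of
the `ℝ`-limit. The set of `ℝ`-limits is a continuous injective image of the Cantor space, hence
compact and perfect.
-/

open Function PiNat Topology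

theorem exists_ne_dist_lt {M : Type*} [MetricSpace M] [PerfectSpace M] (x : M) {r : ℝ}
    (hr : 0 < r) : ∃ y, y ≠ x ∧ dist y x < r :=
  (eventually_mem_nhdsWithin.and (mem_nhdsWithin_of_mem_nhds (ball_mem_nhds x hr))).exists
    (f := 𝓝[≠] x)

theorem perfect_range_of_continuous_of_injective {X : Type*} [TopologicalSpace X] [T2Space X]
    {f : (ℕ → Bool) → X} (hf : Continuous f) (hinj : Injective f) : Perfect (range f) := by
  refine ⟨(isCompact_range hf).isClosed, preperfect_iff_nhds.2 ?_⟩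
  rintro _ ⟨a, rfl⟩ U hU
  obtain ⟨_, ⟨c, n, rfl⟩, hac, hcU⟩ :=
    (isTopologicalBasis_cylinders fun _ => Bool).mem_nhds_iff.1
      (hf.continuousAt.preimage_mem_nhds hU)
  rw [← mem_cylinder_iff_eq.1 hac] at hcU
  refine ⟨f (update a n !(a n)), ⟨hcU (update_mem_cylinder a n _), mem_range_self _⟩, ?_⟩
  refine hinj.ne fun h => ?_
  simpa using congrFun h n

theorem dist_mem_Icc_of_dist_le {X : Type*} [PseudoMetricSpace X] {x y x' y' : X} {δ : ℝ}
    (hx : dist x x' ≤ δ) (hy : dist y y' ≤ δ) :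
    dist x' y' ∈ Icc (dist x y - 2 * δ) (dist x y + 2 * δ) := by
  have := dist_dist_dist_le x y x' y'
  rw [Real.dist_eq, abs_le] at this
  constructor <;> linarith

namespace BiLipschitzCantor

structure Node (M : Type*) where
  pos : M × ℝ
  rad : ℝ
  rad_pos : 0 < rad

variable {M : Type*} [MetricSpace M] [PerfectSpace M]

namespace Node

variable (s : Node M)

def partner : M := (exists_ne_dist_lt s.pos.1 s.rad_pos).choose

def gap : ℝ := dist s.partner s.pos.1

theorem gap_pos : 0 < s.gap :=
  dist_pos.2 (exists_ne_dist_lt s.pos.1 s.rad_pos).choose_spec.1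

theorem gap_lt_rad : s.gap < s.rad :=
  (exists_ne_dist_lt s.pos.1 s.rad_pos).choose_spec.2

def child : Bool → Node M
  | false => ⟨s.pos, s.gap / 8, div_pos s.gap_pos (by norm_num)⟩
  | true => ⟨(s.partner, s.pos.2 + s.gap), s.gap / 8, div_pos s.gap_pos (by norm_num)⟩

theorem child_rad (b : Bool) : (s.child b).rad = s.gap / 8 := by
  cases b <;> rfl

theorem dist_child_le (b : Bool) : dist (s.child b).pos s.pos ≤ s.gap := by
  cases b
  · simp [child, s.gap_pos.le]
  · simp [child, Prod.dist_eq, gap]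

theorem dist_child_fst {b b' : Bool} (h : b ≠ b') :
    dist (s.child b).pos.1 (s.child b').pos.1 = s.gap := by
  cases b <;> cases b' <;> simp_all [child, gap, dist_comm]

theorem dist_child_snd {b b' : Bool} (h : b ≠ b') :
    dist (s.child b).pos.2 (s.child b').pos.2 = s.gap := by
  cases b <;> cases b' <;> simp_all [child, abs_of_pos s.gap_pos]

def descend (a : ℕ → Bool) : ℕ → Node M
  | 0 => s
  | n + 1 => (descend a n).child (a n)

theorem descend_zero (a : ℕ → Bool) : s.descend a 0 = s := rfl

theorem rad_descend_succ_le (a : ℕ → Bool) (n : ℕ) :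
    (s.descend a (n + 1)).rad ≤ (s.descend a n).rad / 8 := by
  rw [descend, child_rad]
  linarith [(s.descend a n).gap_lt_rad]

theorem rad_descend_add_le (a : ℕ → Bool) (n k : ℕ) :
    (s.descend a (k + n)).rad ≤ (s.descend a n).rad * (1 / 8) ^ k := by
  induction k with
  | zero => simp
  | succ k ih =>
    rw [add_right_comm]
    calc (s.descend a (k + n + 1)).rad ≤ (s.descend a (k + n)).rad / 8 :=
          s.rad_descend_succ_le a _
      _ ≤ (s.descend a n).rad * (1 / 8) ^ k / 8 := by gcongr
      _ = (s.descend a n).rad * (1 / 8) ^ (k + 1) := by ring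

theorem dist_descend_succ_le (a : ℕ → Bool) (n : ℕ) :
    dist (s.descend a n).pos (s.descend a (n + 1)).pos ≤ (s.descend a n).rad := by
  rw [dist_comm]
  exact ((s.descend a n).dist_child_le _).trans (s.descend a n).gap_lt_rad.le

theorem dist_descend_le_geometric (a : ℕ → Bool) (n k : ℕ) :
    dist (s.descend a (k + n)).pos (s.descend a (k + 1 + n)).pos ≤
      (s.descend a n).rad * (1 / 8) ^ k := by
  rw [add_right_comm]
  exact (s.dist_descend_succ_le a _).trans (s.rad_descend_add_le a n k)

theorem cauchySeq_descend (a : ℕ → Bool) : CauchySeq fun n => (s.descend a n).pos :=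
  cauchySeq_of_le_geometric (1 / 8) s.rad (by norm_num) (s.dist_descend_le_geometric a 0)

theorem descend_eq_of_mem_cylinder {a b : ℕ → Bool} {n : ℕ} (h : b ∈ cylinder a n) :
    s.descend b n = s.descend a n := by
  induction n with
  | zero => rfl
  | succ n ih =>
    rw [descend, descend, ih (cylinder_anti a n.le_succ h), h n n.lt_succ_self]

variable [CompleteSpace M]

def limit (a : ℕ → Bool) : M × ℝ :=
  (cauchySeq_tendsto_of_complete (s.cauchySeq_descend a)).choose

theorem tendsto_limit (a : ℕ → Bool) :
    Tendsto (fun n => (s.descend a n).pos) atTop (𝓝 (s.limit a)) :=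
  (cauchySeq_tendsto_of_complete (s.cauchySeq_descend a)).choose_spec

theorem dist_descend_limit_le (a : ℕ → Bool) (n : ℕ) :
    dist (s.descend a n).pos (s.limit a) ≤ 8 / 7 * (s.descend a n).rad := by
  have := dist_le_of_le_geometric_of_tendsto₀ (1 / 8) _ (by norm_num)
    (s.dist_descend_le_geometric a n) ((tendsto_add_atTop_iff_nat n).2 (s.tendsto_limit a))
  rw [zero_add] at this
  exact this.trans_eq (by ring)

theorem dist_limit_le_of_mem_cylinder {a b : ℕ → Bool} {n : ℕ} (h : b ∈ cylinder a n) :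
    dist (s.limit b) (s.limit a) ≤ 16 / 7 * s.rad * (1 / 8) ^ n := by
  have hrad := s.rad_descend_add_le a 0 n
  rw [add_zero, descend_zero] at hrad
  have hb := s.dist_descend_limit_le b n
  rw [s.descend_eq_of_mem_cylinder h] at hb
  calc dist (s.limit b) (s.limit a)
      ≤ dist (s.descend a n).pos (s.limit b) + dist (s.descend a n).pos (s.limit a) :=
        dist_triangle_left _ _ _
    _ ≤ 16 / 7 * s.rad * (1 / 8) ^ n := by
        linarith [s.dist_descend_limit_le a n]

theorem continuous_limit : Continuous s.limit := by
  refine continuous_iff_continuousAt.2 fun a => Metric.tendsto_nhds.2 fun ε hε => ?_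
  obtain ⟨n, hn⟩ : ∃ n : ℕ, 16 / 7 * s.rad * (1 / 8 : ℝ) ^ n < ε := by
    have := (tendsto_pow_atTop_nhds_zero_of_lt_one (r := (1 / 8 : ℝ)) (by norm_num) (by norm_num))
    exact ((this.const_mul (16 / 7 * s.rad)).eventually (gt_mem_nhds (by simpa using hε))).exists
  filter_upwards [(isOpen_cylinder _ a n).mem_nhds (self_mem_cylinder a n)] with b hb
  exact (s.dist_limit_le_of_mem_cylinder hb).trans_lt hn

theorem exists_gap_dist_limit {a b : ℕ → Bool} (hab : a ≠ b) : ∃ g > 0,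
    dist (s.limit a).1 (s.limit b).1 ∈ Icc (g - 2 * (g / 7)) (g + 2 * (g / 7)) ∧
      dist (s.limit a).2 (s.limit b).2 ∈ Icc (g - 2 * (g / 7)) (g + 2 * (g / 7)) := by
  have hba : b ∈ cylinder a (firstDiff a b) := firstDiff_comm b a ▸ mem_cylinder_firstDiff b a
  set n := firstDiff a b
  set t := s.descend a n
  have hbt : s.descend b n = t := s.descend_eq_of_mem_cylinder hba
  have hne : a n ≠ b n := apply_firstDiff_ne hab
  have tail_a : dist (t.child (a n)).pos (s.limit a) ≤ t.gap / 7 := by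
    have := s.dist_descend_limit_le a (n + 1)
    rw [descend, child_rad] at this
    linarith
  have tail_b : dist (t.child (b n)).pos (s.limit b) ≤ t.gap / 7 := by
    have := s.dist_descend_limit_le b (n + 1)
    rw [descend, hbt, child_rad] at this
    linarith
  refine ⟨t.gap, t.gap_pos, ?_, ?_⟩
  · simpa only [t.dist_child_fst hne] using
      dist_mem_Icc_of_dist_le ((le_max_left _ _).trans tail_a) ((le_max_left _ _).trans tail_b)
  · simpa only [t.dist_child_snd hne] using
      dist_mem_Icc_of_dist_le ((le_max_right _ _).trans tail_a) ((le_max_right _ _).trans tail_b)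

theorem dist_limit_fst_le (a b : ℕ → Bool) :
    dist (s.limit a).1 (s.limit b).1 ≤ 2 * dist (s.limit a).2 (s.limit b).2 := by
  rcases eq_or_ne a b with rfl | hab
  · simp
  obtain ⟨g, hg, ⟨-, h₁⟩, ⟨h₂, -⟩⟩ := s.exists_gap_dist_limit hab
  linarith

theorem dist_limit_snd_le (a b : ℕ → Bool) :
    dist (s.limit a).2 (s.limit b).2 ≤ 2 * dist (s.limit a).1 (s.limit b).1 := by
  rcases eq_or_ne a b with rfl | hab
  · simp
  obtain ⟨g, hg, ⟨h₁, -⟩, ⟨-, h₂⟩⟩ := s.exists_gap_dist_limit hab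
  linarith

theorem injective_limit_snd : Injective fun a => (s.limit a).2 := by
  intro a b h
  by_contra hab
  obtain ⟨g, hg, -, ⟨h₁, -⟩⟩ := s.exists_gap_dist_limit hab
  simp only at h
  rw [h, dist_self] at h₁
  linarith

end Node

end BiLipschitzCantor

/-- a nonempty complete metric space without isolated points contains a
bi-Lipschitz copy of a (nonempty, compact) perfect subset of `ℝ`. -/
theorem stmt_10 {M : Type*} [MetricSpace M] [CompleteSpace M] [Nonempty M]
    (hM : ∀ x : M, Filter.NeBot (nhdsWithin x {x}ᶜ)) :
    ∃ (C : Set ℝ) (φ : ℝ → M) (L : ℝ),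
      IsCompact C ∧ Perfect C ∧ C.Nonempty ∧ 1 ≤ L ∧ Set.InjOn φ C ∧
      ∀ s ∈ C, ∀ t ∈ C,
        (1 / L) * |s - t| ≤ dist (φ s) (φ t) ∧ dist (φ s) (φ t) ≤ L * |s - t| := by
  have : PerfectSpace M := perfectSpace_iff_forall_not_isolated.2 hM
  let root : BiLipschitzCantor.Node M := ⟨(Classical.arbitrary M, 0), 1, one_pos⟩
  let H := fun a => (root.limit a).2
  let φ := fun t => (root.limit (invFun H t)).1
  have hinj : Injective H := root.injective_limit_snd
  have hcont : Continuous H := continuous_snd.comp root.continuous_limit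
  have hφ (a : ℕ → Bool) : φ (H a) = (root.limit a).1 := by
    simp only [φ, leftInverse_invFun hinj a]
  have bilip (a b : ℕ → Bool) :
      1 / 2 * |H a - H b| ≤ dist (φ (H a)) (φ (H b)) ∧
        dist (φ (H a)) (φ (H b)) ≤ 2 * |H a - H b| := by
    rw [hφ, hφ, ← Real.dist_eq]
    constructor <;> linarith [root.dist_limit_fst_le a b, root.dist_limit_snd_le a b]
  refine ⟨range H, φ, 2, isCompact_range hcont,
    perfect_range_of_continuous_of_injective hcont hinj, range_nonempty H, one_le_two, ?_, ?_⟩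
  · rintro _ ⟨a, rfl⟩ _ ⟨b, rfl⟩ h
    have := (bilip a b).1
    rw [h, dist_self] at this
    exact sub_eq_zero.1 (abs_nonpos_iff.1 (by linarith))
  · rintro _ ⟨a, rfl⟩ _ ⟨b, rfl⟩
    exact bilip a b
end
end

section
/- Let M be a metric space, let δ, ε > 0, R ≥ 1, let n be a positive integer, let a_1,…,a_n ∈ ℝ and x_i ≠ y_i ∈ M (1 ≤ i ≤ n) satisfy ∑_{i=1}^n |a_i| ≤ R, and suppose that for every subset I ⊆ {1,…,n} with ∑_{i∈I} d(x_i, y_i) < δ one has ∑_{i∈I} |a_i| < ε. For every i, let (u_1^i, …, u_{k_i+1}^i) be a partition of the couple (x_i, y_i), i.e., a finite sequence of pairwise distinct points of M with u_1^i = x_i, u_{k_i+1}^i = y_i, and ∑_{j=1}^{k_i} d(u_j^i, u_{j+1}^i) = d(x_i, y_i). Then for every set 𝓘 ⊆ {(i,j) : 1 ≤ i ≤ n, 1 ≤ j ≤ k_i} with ∑_{(i,j)∈𝓘} d(u_j^i, u_{j+1}^i) < δε/R, one has ∑_{(i,j)∈𝓘} |a_i|·d(u_j^i, u_{j+1}^i)/d(x_i,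 y_i) < 3ε + 4ε²/R. -/
open Metric Set Filter Pointwise

noncomputable section

/-!
Write `S i` for the total length of the chosen segments lying on the `i`-th couple, so that
`S i ≤ d(x_i, y_i)` and the sum to bound is `∑ |a_i| S_i / d(x_i, y_i)`. Split the couples at
the threshold `S_i = (ε / R) d(x_i, y_i)`. By a Markov-type estimate the couples above it have
total length `< δ`, so their weights sum to `< ε`, and each of their ratios is `≤ 1`. The couples
below it contribute at most `(ε / R) ∑ |a_i| ≤ ε`. Hence the sum is even `< 2ε`.
-/

open Finset

section Threshold

variable {ι : Type*} [Fintype ι] {w D S : ι → ℝ} {c : ℝ}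

theorem mul_sum_filter_lt_le_sum (hS : ∀ i, 0 ≤ S i) :
    c * ∑ i with c * D i < S i, D i ≤ ∑ i, S i :=
  calc c * ∑ i with c * D i < S i, D i
      = ∑ i with c * D i < S i, c * D i := mul_sum _ _ _
    _ ≤ ∑ i with c * D i < S i, S i := sum_le_sum fun _ hi => (mem_filter.1 hi).2.le
    _ ≤ ∑ i, S i := sum_le_sum_of_subset_of_nonneg (subset_univ _) fun i _ _ => hS i

theorem sum_mul_div_lt_add_mul_sum {δ ε : ℝ} (hc : 0 < c) (hw : ∀ i, 0 ≤ w i)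
    (hS : ∀ i, 0 ≤ S i) (hSD : ∀ i, S i ≤ D i)
    (hsmall : ∀ I : Finset ι, ∑ i ∈ I, D i < δ → ∑ i ∈ I, w i < ε)
    (hStot : ∑ i, S i < δ * c) :
    ∑ i, w i * (S i / D i) < ε + c * ∑ i, w i := by
  classical
  set I : Finset ι := {i | c * D i < S i}
  have hI : ∑ i ∈ I, w i < ε := by
    refine hsmall I (lt_of_mul_lt_mul_left ?_ hc.le)
    linarith [mul_sum_filter_lt_le_sum (D := D) (c := c) hS]
  have hlarge : ∑ i ∈ I, w i * (S i / D i) ≤ ∑ i ∈ I, w i :=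
    sum_le_sum fun i _ => mul_le_of_le_one_right (hw i)
      (div_le_one_of_le₀ (hSD i) ((hS i).trans (hSD i)))
  have hbelow : ∑ i ∈ Iᶜ, w i * (S i / D i) ≤ c * ∑ i, w i := by
    calc ∑ i ∈ Iᶜ, w i * (S i / D i) ≤ ∑ i ∈ Iᶜ, c * w i := by
          refine sum_le_sum fun i hi => ?_
          have hSi : S i ≤ c * D i := by simpa [I] using hi
          rw [mul_comm c]
          exact mul_le_mul_of_nonneg_left
            (div_le_of_le_mul₀ ((hS i).trans (hSD i)) hc.le hSi) (hw i)
      _ = c * ∑ i ∈ Iᶜ, w i := (mul_sum _ _ _).symm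
      _ ≤ c * ∑ i, w i := mul_le_mul_of_nonneg_left
          (sum_le_sum_of_subset_of_nonneg (subset_univ _) fun i _ _ => hw i) hc.le
  rw [← sum_add_sum_compl I]
  linarith

end Threshold

section Fibres

variable {ι : Type*} {κ : ι → Type*}

theorem sum_filter_fst_eq_le_sum_fiber [DecidableEq ι] {i : ι} [Fintype (κ i)]
    (s : Finset (Σ i, κ i)) {g : (Σ i, κ i) → ℝ} (hg : ∀ p, 0 ≤ g p) :
    ∑ p ∈ s with p.1 = i, g p ≤ ∑ j, g ⟨i, j⟩ := by
  have hsub : {p ∈ s | p.1 = i} ⊆ univ.map ⟨Sigma.mk i, sigma_mk_injective⟩ := by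
    rintro ⟨i', j⟩ hp
    obtain rfl : i' = i := (mem_filter.1 hp).2
    simp
  calc ∑ p ∈ s with p.1 = i, g p
      ≤ ∑ p ∈ univ.map ⟨Sigma.mk i, sigma_mk_injective⟩, g p :=
        sum_le_sum_of_subset_of_nonneg hsub fun p _ _ => hg p
    _ = ∑ j, g ⟨i, j⟩ := sum_map _ _ _

theorem sum_sigma_mul_div_eq_sum_fiberwise [Fintype ι] [DecidableEq ι]
    (s : Finset (Σ i, κ i)) (w D : ι → ℝ) (g : (Σ i, κ i) → ℝ) :
    ∑ p ∈ s, w p.1 * (g p / D p.1) = ∑ i, w i * ((∑ p ∈ s with p.1 = i, g p) / D i) := by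
  rw [← sum_fiberwise s Sigma.fst]
  refine sum_congr rfl fun i _ => ?_
  rw [sum_div, mul_sum]
  refine sum_congr rfl fun p hp => ?_
  rw [(mem_filter.1 hp).2]

end Fibres

/-- `u i : Fin (k i + 1) → M` lists the points `u_1^i, …, u_{k_i+1}^i` of the partition of
`(x i, y i)`, and `⟨i, j⟩ : (i : Fin n) × Fin (k i)` indexes its segment from `u_{j+1}^i` to
`u_{j+2}^i`. -/
theorem stmt_14_general {M : Type*} [MetricSpace M]
    (δ ε R : ℝ) (hε : 0 < ε) (hR : 1 ≤ R)
    (n : ℕ) (a : Fin n → ℝ) (x y : Fin n → M)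
    (haR : ∑ i, |a i| ≤ R)
    (hsmall : ∀ I : Finset (Fin n),
      ∑ i ∈ I, dist (x i) (y i) < δ → ∑ i ∈ I, |a i| < ε)
    (k : Fin n → ℕ) (u : (i : Fin n) → Fin (k i + 1) → M)
    (hupart : ∀ i, ∑ j : Fin (k i), dist (u i j.castSucc) (u i j.succ) = dist (x i) (y i))
    (𝓘 : Finset ((i : Fin n) × Fin (k i)))
    (h𝓘 : ∑ p ∈ 𝓘, dist (u p.1 p.2.castSucc) (u p.1 p.2.succ) < δ * ε / R) :
    ∑ p ∈ 𝓘, |a p.1| * (dist (u p.1 p.2.castSucc) (u p.1 p.2.succ) / dist (x p.1) (y p.1))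
      < 3 * ε + 4 * ε ^ 2 / R := by
  have hR₀ : 0 < R := one_pos.trans_le hR
  have hlt := sum_mul_div_lt_add_mul_sum (w := fun i => |a i|) (D := fun i => dist (x i) (y i))
    (S := fun i => ∑ p ∈ 𝓘 with p.1 = i, dist (u p.1 p.2.castSucc) (u p.1 p.2.succ))
    (div_pos hε hR₀) (fun i => abs_nonneg (a i)) (fun i => sum_nonneg fun _ _ => dist_nonneg)
    (fun i => (sum_filter_fst_eq_le_sum_fiber 𝓘 fun p => dist_nonneg).trans_eq (hupart i))
    hsmall (by rwa [sum_fiberwise, ← mul_div_assoc])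
  have hεR : ε / R * ∑ i, |a i| ≤ ε := by
    calc ε / R * ∑ i, |a i| ≤ ε / R * R := by gcongr
      _ = ε := div_mul_cancel₀ ε hR₀.ne'
  have hquad : 0 < 4 * ε ^ 2 / R := div_pos (by positivity) hR₀
  rw [sum_sigma_mul_div_eq_sum_fiberwise 𝓘 (fun i => |a i|) (fun i => dist (x i) (y i))
    fun p => dist (u p.1 p.2.castSucc) (u p.1 p.2.succ)]
  calc _ < ε + ε / R * ∑ i, |a i| := hlt
    _ < 3 * ε + 4 * ε ^ 2 / R := by linarith

/-- refinement lemma for convex sums of molecules under partitions of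
couples of points. Here `u i : Fin (k i + 1) → M` lists the `k i + 1` points
`u_1^i, …, u_{k_i+1}^i` of a partition of `(x i, y i)` into `k i` segments. -/
theorem stmt_14 {M : Type*} [MetricSpace M]
    (δ ε R : ℝ) (hδ : 0 < δ) (hε : 0 < ε) (hR : 1 ≤ R)
    (n : ℕ) (hn : 0 < n) (a : Fin n → ℝ) (x y : Fin n → M) (hxy : ∀ i, x i ≠ y i)
    (haR : ∑ i, |a i| ≤ R)
    (hsmall : ∀ I : Finset (Fin n),
      ∑ i ∈ I, dist (x i) (y i) < δ → ∑ i ∈ I, |a i| < ε)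
    (k : Fin n → ℕ) (u : (i : Fin n) → Fin (k i + 1) → M)
    (huinj : ∀ i, Function.Injective (u i))
    (hufirst : ∀ i, u i 0 = x i) (hulast : ∀ i, u i (Fin.last (k i)) = y i)
    (hupart : ∀ i, ∑ j : Fin (k i), dist (u i j.castSucc) (u i j.succ) = dist (x i) (y i))
    (𝓘 : Finset ((i : Fin n) × Fin (k i)))
    (h𝓘 : ∑ p ∈ 𝓘, dist (u p.1 p.2.castSucc) (u p.1 p.2.succ) < δ * ε / R) :
    ∑ p ∈ 𝓘, |a p.1| * (dist (u p.1 p.2.castSucc) (u p.1 p.2.succ) / dist (x p.1) (y p.1))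
      < 3 * ε + 4 * ε ^ 2 / R :=
  stmt_14_general δ ε R hε hR n a x y haR hsmall k u hupart 𝓘 h𝓘
end
end

section
/- Let M be a pointed metric space and let (γ_n) be a sequence in the unit sphere of F(M) such that each γ_n admits a convex sum/series representation γ_n = ∑_k λ_k^n m_{x_k^n y_k^n} with ∑_k |λ_k^n| = ‖γ_n‖ = 1. If lim_{n→∞} ∑_k d(x_k^n, y_k^n) = 0, then for every γ ∈ F(M) one has lim_{n→∞} ‖γ + γ_n‖ = ‖γ‖ + 1. -/
/-!
Norm `γ` by a functional `ψ` and `γₙ` by `ψₙ`, and put `f = ψ ∘ δ`, `g = ψₙ ∘ δ`. Let `T` be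
a primitive of the indicator of a set `U ⊆ ℝ` covering the intervals between `(g - f)(xₖ)` and
`(g - f)(yₖ)`. Since `T` is monotone and `1`-Lipschitz, `u = f + T ∘ (g - f)` is still
`1`-Lipschitz; it has the same increments as `g` on every pair `(xₖ, yₖ)`, and
`|u - f| ≤ |U| ≤ 2 ∑ₖ d(xₖ, yₖ)`. The linear extension `φₙ` of `u` therefore satisfies
`φₙ γₙ = ψₙ γₙ = 1`, and `φₙ → ψ` on `δ(M)`, hence, the `φₙ` being uniformly bounded, on all of
`F(M)`. Thus `‖γ + γₙ‖ ≥ φₙ γ + 1 → ‖γ‖ + 1`.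
-/

open Metric Set Filter Pointwise

noncomputable section

open MeasureTheory
open scoped Interval NNReal Topology

def indicatorPrimitive (U : Set ℝ) (s : ℝ) : ℝ :=
  ∫ t in (0)..s, U.indicator 1 t

section IndicatorPrimitive

variable {U : Set ℝ}

lemma intervalIntegrable_indicator_one (hU : MeasurableSet U) (a b : ℝ) :
    IntervalIntegrable (U.indicator (1 : ℝ → ℝ)) volume a b :=
  intervalIntegrable_iff.mpr <|
    (intervalIntegrable_iff.mp (intervalIntegrable_const (c := (1 : ℝ)))).indicator hU

lemma indicatorPrimitive_sub (hU : MeasurableSet U) (a b : ℝ) :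
    indicatorPrimitive U b - indicatorPrimitive U a = ∫ t in a..b, U.indicator 1 t :=
  intervalIntegral.integral_interval_sub_left (intervalIntegrable_indicator_one hU _ _)
    (intervalIntegrable_indicator_one hU _ _)

lemma indicatorPrimitive_zero (U : Set ℝ) : indicatorPrimitive U 0 = 0 :=
  intervalIntegral.integral_same

lemma monotone_indicatorPrimitive (hU : MeasurableSet U) : Monotone (indicatorPrimitive U) :=
  fun a b hab => sub_nonneg.mp <| (indicatorPrimitive_sub hU a b).symm ▸
    intervalIntegral.integral_nonneg hab fun t _ => Set.indicator_nonneg (fun _ _ => zero_le_one) t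

lemma lipschitzWith_indicatorPrimitive (hU : MeasurableSet U) :
    LipschitzWith 1 (indicatorPrimitive U) := by
  refine LipschitzWith.of_dist_le_mul fun b a => ?_
  have hle : ∀ t, ‖U.indicator (1 : ℝ → ℝ) t‖ ≤ 1 := fun t => by
    by_cases ht : t ∈ U <;> simp [ht]
  rw [Real.dist_eq, Real.dist_eq, NNReal.coe_one, one_mul, abs_sub_comm b a, ← Real.norm_eq_abs,
    indicatorPrimitive_sub hU a b, abs_sub_comm]
  simpa using intervalIntegral.norm_integral_le_of_norm_le_const (a := a) (b := b) fun t _ => hle t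

lemma indicatorPrimitive_sub_of_uIoc_subset (hU : MeasurableSet U) {a b : ℝ} (hab : Ι a b ⊆ U) :
    indicatorPrimitive U b - indicatorPrimitive U a = b - a := by
  rw [indicatorPrimitive_sub hU, intervalIntegral.integral_congr_ae (g := fun _ => (1 : ℝ))
    (ae_of_all _ fun t ht => Set.indicator_of_mem (hab ht) _)]
  simp

lemma abs_indicatorPrimitive_le (hU : MeasurableSet U) (hfin : volume U ≠ ⊤) (s : ℝ) :
    |indicatorPrimitive U s| ≤ volume.real U := by
  rw [← Real.norm_eq_abs]
  refine intervalIntegral.norm_integral_le_integral_norm_uIoc.trans ?_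
  have : ∀ t, ‖U.indicator (1 : ℝ → ℝ) t‖ = U.indicator 1 t := fun t => by
    by_cases ht : t ∈ U <;> simp [ht]
  simp_rw [this]
  rw [integral_indicator_one hU, measureReal_restrict_apply hU]
  exact measureReal_mono Set.inter_subset_left hfin

end IndicatorPrimitive

lemma LipschitzWith.add_comp_sub_of_monotone {α : Type*} [PseudoMetricSpace α] {K : ℝ≥0}
    {f g : α → ℝ} {T : ℝ → ℝ} (hf : LipschitzWith K f) (hg : LipschitzWith K g)
    (hT : Monotone T) (hT₁ : LipschitzWith 1 T) :
    LipschitzWith K fun z => f z + T (g z - f z) := by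
  -- the increment of `f + T ∘ (g - f)` lies between the increments of `f` and of `g`
  have key : ∀ a b, g b - f b ≤ g a - f a →
      |(f a + T (g a - f a)) - (f b + T (g b - f b))| ≤ K * dist a b := by
    intro a b hD
    have hT₀ := sub_nonneg.mpr (hT hD)
    have hT₂ := (le_abs_self _).trans (hT₁.dist_le_mul (g a - f a) (g b - f b))
    have hf₁ := abs_le.mp (hf.dist_le_mul a b)
    have hg₁ := abs_le.mp (hg.dist_le_mul a b)
    rw [Real.dist_eq, NNReal.coe_one, one_mul, abs_of_nonneg (by linarith)] at hT₂
    rw [abs_le]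
    constructor <;> linarith
  refine LipschitzWith.of_dist_le_mul fun a b => ?_
  rw [Real.dist_eq]
  rcases le_total (g b - f b) (g a - f a) with hD | hD
  · exact key a b hD
  · rw [abs_sub_comm, dist_comm]
    exact key b a hD

theorem exists_lipschitzWith_sub_eq_of_summable_dist {α ι : Type*} [PseudoMetricSpace α]
    [Countable ι] {K : ℝ≥0} {f g : α → ℝ} (hf : LipschitzWith K f) (hg : LipschitzWith K g)
    {x y : ι → α} (hxy : Summable fun k => dist (x k) (y k)) :
    ∃ u : α → ℝ, LipschitzWith K u ∧ (∀ k, u (x k) - u (y k) = g (x k) - g (y k)) ∧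
      (∀ z, |u z - f z| ≤ 2 * K * ∑' k, dist (x k) (y k)) ∧ ∀ z, g z = f z → u z = f z := by
  set D : α → ℝ := fun z => g z - f z
  set U : Set ℝ := ⋃ k, Ι (D (x k)) (D (y k))
  have hU : MeasurableSet U := MeasurableSet.iUnion fun _ => measurableSet_uIoc
  have hD : ∀ k, |D (y k) - D (x k)| ≤ 2 * K * dist (x k) (y k) := fun k => by
    have hf₁ := abs_le.mp (hf.dist_le_mul (x k) (y k))
    have hg₁ := abs_le.mp (hg.dist_le_mul (x k) (y k))
    rw [abs_le]
    constructor <;> linarith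
  have hDsum : Summable fun k => |D (y k) - D (x k)| :=
    (hxy.mul_left (2 * K : ℝ)).of_nonneg_of_le (fun _ => abs_nonneg _) hD
  have hvol : volume U ≤ ENNReal.ofReal (∑' k, |D (y k) - D (x k)|) := by
    refine (measure_iUnion_le _).trans_eq ?_
    simp_rw [Real.volume_uIoc]
    exact (ENNReal.ofReal_tsum_of_nonneg (fun _ => abs_nonneg _) hDsum).symm
  have hfin : volume U ≠ ⊤ := ne_top_of_le_ne_top ENNReal.ofReal_ne_top hvol
  have hvol_real : volume.real U ≤ 2 * K * ∑' k, dist (x k) (y k) := by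
    rw [← tsum_mul_left]
    refine (ENNReal.toReal_le_of_le_ofReal (tsum_nonneg fun _ => abs_nonneg _) hvol).trans ?_
    exact hDsum.tsum_le_tsum hD (hxy.mul_left _)
  refine ⟨fun z => f z + indicatorPrimitive U (D z),
    hf.add_comp_sub_of_monotone hg (monotone_indicatorPrimitive hU)
      (lipschitzWith_indicatorPrimitive hU), fun k => ?_, fun z => ?_, fun z hz => ?_⟩
  · have := indicatorPrimitive_sub_of_uIoc_subset hU
      (subset_iUnion (fun k => Ι (D (x k)) (D (y k))) k)
    simp only [D] at this ⊢
    linarith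
  · simpa using (abs_indicatorPrimitive_le hU hfin _).trans hvol_real
  · simp [D, hz, indicatorPrimitive_zero]

namespace FreeSpaceData

variable {M : Type*} [MetricSpace M] {base : M} {F : Type*} [NormedAddCommGroup F]
  [NormedSpace ℝ F] (h : FreeSpaceData M base F)

lemma isometry_toFun : Isometry h.toFun :=
  Isometry.of_dist_eq fun x y => by rw [dist_eq_norm, h.norm_sub]

lemma lipschitzWith_comp_toFun (φ : F →L[ℝ] ℝ) : LipschitzWith ‖φ‖₊ fun z => φ (h.toFun z) := by
  have := φ.lipschitz.comp h.isometry_toFun.lipschitz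
  rwa [mul_one] at this

lemma map_molecule (φ : F →L[ℝ] ℝ) (x y : M) :
    φ (h.molecule x y) = (dist x y)⁻¹ * (φ (h.toFun x) - φ (h.toFun y)) := by
  simp [molecule]

theorem exists_norm_le_one_map_molecule_eq {ι : Type*} [Countable ι] {ψ ψ' : F →L[ℝ] ℝ}
    (hψ : ‖ψ‖ ≤ 1) (hψ' : ‖ψ'‖ ≤ 1) {x y : ι → M} (hxy : Summable fun k => dist (x k) (y k)) :
    ∃ φ : F →L[ℝ] ℝ, ‖φ‖ ≤ 1 ∧
      (∀ k, φ (h.molecule (x k) (y k)) = ψ' (h.molecule (x k) (y k))) ∧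
      ∀ z, |φ (h.toFun z) - ψ (h.toFun z)| ≤ 2 * ∑' k, dist (x k) (y k) := by
  have lip : ∀ φ : F →L[ℝ] ℝ, ‖φ‖ ≤ 1 → LipschitzWith 1 fun z => φ (h.toFun z) :=
    fun φ hφ => (h.lipschitzWith_comp_toFun φ).weaken (by exact_mod_cast hφ)
  obtain ⟨u, hu, hux, huψ, hubase⟩ :=
    exists_lipschitzWith_sub_eq_of_summable_dist (lip ψ hψ) (lip ψ' hψ') hxy
  obtain ⟨φ, hφ, hφu⟩ := h.extend 1 u hu (by simpa [h.map_base] using hubase base)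
  refine ⟨φ, by simpa using hφ, fun k => ?_, fun z => ?_⟩
  · rw [map_molecule, map_molecule, hφu, hφu, hux]
  · simpa [hφu] using huψ z

end FreeSpaceData

theorem ContinuousLinearMap.tendsto_apply_of_tendsto_apply_of_dense_span
    {E G : Type*} [NormedAddCommGroup E] [NormedSpace ℝ E] [NormedAddCommGroup G]
    [NormedSpace ℝ G] {s : Set E} (hs : (Submodule.span ℝ s).topologicalClosure = ⊤)
    {ι : Type*} {l : Filter ι} {φ : ι → E →L[ℝ] G} {ψ : E →L[ℝ] G} {C : ℝ≥0}
    (hφ : ∀ i, ‖φ i‖₊ ≤ C) (hlim : ∀ z ∈ s, Tendsto (fun i => φ i z) l (𝓝 (ψ z))) (v : E) :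
    Tendsto (fun i => φ i v) l (𝓝 (ψ v)) := by
  let S : Submodule ℝ E :=
    { carrier := {v | Tendsto (fun i => φ i v) l (𝓝 (ψ v))}
      add_mem' := fun ha hb => by simpa using ha.add hb
      zero_mem' := by simpa using tendsto_const_nhds
      smul_mem' := fun c _ hv => by simpa using hv.const_smul c }
  have hS : IsClosed (S : Set E) :=
    (LipschitzWith.uniformEquicontinuous (fun i => ⇑(φ i)) C fun i =>
      (φ i).lipschitz.weaken (hφ i)).equicontinuous.isClosed_setOfPred_tendsto ψ.continuous
  have hspan : (Submodule.span ℝ s).topologicalClosure ≤ S :=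
    Submodule.topologicalClosure_minimal _ (Submodule.span_le.mpr hlim) hS
  exact (hs ▸ hspan) (Submodule.mem_top (x := v))

theorem stmt_15_general {M : Type*} [MetricSpace M] (base : M)
    {F : Type*} [NormedAddCommGroup F] [NormedSpace ℝ F]
    (h : FreeSpaceData M base F)
    (γseq : ℕ → F) (hnorm : ∀ n, ‖γseq n‖ = 1)
    (lam : ℕ → ℕ → ℝ) (x y : ℕ → ℕ → M)
    (hrep : ∀ n, HasSum (fun k => lam n k • h.molecule (x n k) (y n k)) (γseq n))
    (hdsum : ∀ n, Summable fun k => dist (x n k) (y n k))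
    (hdist : Filter.Tendsto (fun n => ∑' k, dist (x n k) (y n k)) Filter.atTop (nhds 0))
    (γ : F) :
    Filter.Tendsto (fun n => ‖γ + γseq n‖) Filter.atTop (nhds (‖γ‖ + 1)) := by
  obtain ⟨ψ, hψ, hψγ⟩ := exists_dual_vector'' ℝ γ
  choose ψn hψn hψnγ using fun n => exists_dual_vector'' ℝ (γseq n)
  simp only [RCLike.ofReal_real_eq_id, id] at hψγ hψnγ
  choose φ hφ hφmol hφδ using fun n =>
    h.exists_norm_le_one_map_molecule_eq hψ (hψn n) (hdsum n)
  have hφγseq : ∀ n, φ n (γseq n) = 1 := fun n => by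
    have hφsum := (hrep n).mapL (φ n)
    have hψsum := (hrep n).mapL (ψn n)
    simp only [map_smul, hφmol] at hφsum hψsum
    rw [hφsum.unique hψsum, hψnγ, hnorm]
  have hφγ : Tendsto (fun n => φ n γ) atTop (𝓝 ‖γ‖) := by
    rw [← hψγ]
    refine ContinuousLinearMap.tendsto_apply_of_tendsto_apply_of_dense_span h.dense_span
      (C := 1) (fun n => by exact_mod_cast hφ n) (fun _ ⟨z, hz⟩ => hz ▸ ?_) γ
    rw [tendsto_iff_norm_sub_tendsto_zero]
    refine squeeze_zero (fun _ => norm_nonneg _) (fun n => hφδ n z) ?_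
    simpa using hdist.const_mul 2
  refine tendsto_of_tendsto_of_tendsto_of_le_of_le (hφγ.add_const 1) tendsto_const_nhds
    (fun n => ?_) (fun n => ?_)
  · calc φ n γ + 1 = φ n (γ + γseq n) := by rw [map_add, hφγseq]
      _ ≤ ‖γ + γseq n‖ :=
        (le_abs_self _).trans (by simpa using (φ n).le_of_opNorm_le (hφ n) (γ + γseq n))
  · calc ‖γ + γseq n‖ ≤ ‖γ‖ + ‖γseq n‖ := norm_add_le _ _
      _ = ‖γ‖ + 1 := by rw [hnorm]

/-- if `(γ_n) ⊆ S_{F(M)}` are convex sums/series of molecules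
`γ_n = ∑_k λ_k^n m_{x_k^n y_k^n}` with `∑_k |λ_k^n| = ‖γ_n‖ = 1` and
`∑_k d(x_k^n, y_k^n) → 0`, then `‖γ + γ_n‖ → ‖γ‖ + 1` for every `γ ∈ F(M)`. -/
theorem stmt_15 {M : Type*} [MetricSpace M] (base : M)
    {F : Type*} [NormedAddCommGroup F] [NormedSpace ℝ F] [CompleteSpace F]
    (h : FreeSpaceData M base F)
    (γseq : ℕ → F) (hnorm : ∀ n, ‖γseq n‖ = 1)
    (lam : ℕ → ℕ → ℝ) (x y : ℕ → ℕ → M) (hxy : ∀ n k, x n k ≠ y n k)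
    (hrep : ∀ n, HasSum (fun k => lam n k • h.molecule (x n k) (y n k)) (γseq n))
    (hlam : ∀ n, Summable fun k => |lam n k|)
    (hconv : ∀ n, ∑' k, |lam n k| = 1)
    (hdsum : ∀ n, Summable fun k => dist (x n k) (y n k))
    (hdist : Filter.Tendsto (fun n => ∑' k, dist (x n k) (y n k)) Filter.atTop (nhds 0))
    (γ : F) :
    Filter.Tendsto (fun n => ‖γ + γseq n‖) Filter.atTop (nhds (‖γ‖ + 1)) :=
  stmt_15_general base h γseq hnorm lam x y hrep hdsum hdist γ
end
end
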